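/- arXiv:1510.08842 — 4 statements merged into one kernel-verified Lean document; each statement's English description precedes it below -/
import Mathlib

section
/- Convergence of MOCCA implies criticality (Theorem 1). Suppose the approximation families (F_v), (G_z) satisfy the standing conditions, and additionally that the map (v,w) ↦ ∇(F − F_v)(w) is jointly continuous in (v,w) and the map (z,x) ↦ ∇(G − G_z)(x) is jointly continuous in (z,x). Let θ ∈ [0,1], let Σ ∈ ℝ^{m×m} and T ∈ ℝ^{d×d} be diagonal matrices with positive diagonal entries, and let L_1, L_2, … ≥ 1 be inner-loop lengths. Suppose sequences x_{t;ℓ} ∈ ℝ^d, w_{t;ℓ} ∈ ℝ^m (t ≥ 1, 0 ≤ ℓ ≤ L_t), x_t, z_t ∈ ℝ^d, w_t ∈ ℝ^m, v_t ∈ ℝ^m satisfy, for every t ≥ 0 and 1 ≤ ℓ ≤ L_{t+1}: (i) (x_{t+1;0}, w_{t+1;0}) = (x_t, w_t); (ii) T^{-1}(x_{t+1;ℓ-1} − x_{t+1;ℓ}) − Kᵀ w_{t+1;ℓ-1} ∈ ∂G_{z_t}(x_{t+1;ℓ}); (iii) w_{t+1;ℓ} ∈ ∂F_{v_t}(Σ^{-1}(w_{t+1;ℓ-1}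 − w_{t+1;ℓ}) + K x̄_{t+1;ℓ}) where x̄_{t+1;ℓ} = x_{t+1;ℓ} + θ(x_{t+1;ℓ} − x_{t+1;ℓ-1}); (iv) x_{t+1} = (1/L_{t+1}) Σ_{ℓ=1}^{L_{t+1}} x_{t+1;ℓ}, w_{t+1} = (1/L_{t+1}) Σ_{ℓ=1}^{L_{t+1}} w_{t+1;ℓ}, z_{t+1} = x_{t+1}, and v_{t+1} = (1/L_{t+1}) Σ_{ℓ=1}^{L_{t+1}} (Σ^{-1}(w_{t+1;ℓ-1} − w_{t+1;ℓ}) + K x̄_{t+1;ℓ}). If the concatenated sequence (x_{t;ℓ}) converges to a point x̂ ∈ ℝ^d, (w_{t;ℓ}) converges to ŵ ∈ ℝ^m, z_t converges to ẑ, and v_t converges to v̂, then x̂ is a critical point of the original problem: there exist a ∈ ∂F_{K x̂}(K x̂) and b ∈ ∂G_{x̂}(x̂) with Kᵀ a + b = 0. -/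
open Matrix

noncomputable section

/-- The continuous linear map `x ↦ ⟨g, x⟩` on `ℝ^n`, used to express gradients. -/
def dotCLM {n : ℕ} (g : Fin n → ℝ) : (Fin n → ℝ) →L[ℝ] ℝ :=
  LinearMap.toContinuousLinearMap
    { toFun := fun x => g ⬝ᵥ x
      map_add' := fun x y => by simp [dotProduct_add]
      map_smul' := fun c x => by simp [dotProduct_smul] }

/-- Euclidean norm `‖x‖₂`. -/
def e2 {n : Type*} [Fintype n] (x : n → ℝ) : ℝ := Real.sqrt (x ⬝ᵥ x)

/-- `g` is a subgradient of `φ` at `x`. -/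
def IsSubgrad {n : Type*} [Fintype n] (φ : (n → ℝ) → ℝ) (x g : n → ℝ) : Prop :=
  ∀ y, φ x + g ⬝ᵥ (y - x) ≤ φ y

/-! Look at the last inner iterate of every outer loop. Since the concatenated iterates
converge, the dual arguments in (iii) tend to `K x̂`, the primal subgradients in (ii) tend to
`-Kᵀ ŵ`, and the averages (iv) force `v̂ = K x̂` and `ẑ = x̂`. The subgradient inequalities pass
to the limit because the increments
`F_v y - F_v x = (F y - F x) - ∫₀¹ ⟪∇(F - F_v)(x + s (y - x)), y - x⟫ ds`
are jointly continuous in `(v, x, y)`, and likewise for `G`. -/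

open Filter Topology

lemma norm_le_e2 {ι : Type*} [Fintype ι] (u : ι → ℝ) : ‖u‖ ≤ e2 u := by
  refine (pi_norm_le_iff_of_nonneg (Real.sqrt_nonneg _)).2 fun i => ?_
  rw [Real.norm_eq_abs]
  refine Real.abs_le_sqrt ?_
  simpa [sq, dotProduct] using
    Finset.single_le_sum (fun j _ => mul_self_nonneg (u j)) (Finset.mem_univ i)

lemma Continuous.dotCLM {X : Type*} [TopologicalSpace X] {n : ℕ} {g : X → Fin n → ℝ}
    (hg : Continuous g) : Continuous fun x => dotCLM (g x) :=
  continuous_clm_apply.2 fun _ => hg.dotProduct continuous_const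

lemma Filter.Tendsto.const_mulVec {ι : Type*} {l : Filter ι} {a b : Type*} [Fintype b]
    (A : Matrix a b ℝ) {f : ι → b → ℝ} {c : b → ℝ} (hf : Tendsto f l (𝓝 c)) :
    Tendsto (fun i => A *ᵥ f i) l (𝓝 (A *ᵥ c)) :=
  ((continuous_const.matrix_mulVec continuous_id).tendsto c).comp hf

section ParametricDifference

variable {P E : Type*} [TopologicalSpace P] [NormedAddCommGroup E] [NormedSpace ℝ E]

lemma sub_eq_integral_of_hasFDerivAt {f : E → ℝ} {f' : E → E →L[ℝ] ℝ}
    (hf : ∀ x, HasFDerivAt f (f' x) x) (hf' : Continuous f') (x y : E) :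
    f y - f x = ∫ s in (0 : ℝ)..1, f' (x + s • (y - x)) (y - x) := by
  have hline : Continuous fun s : ℝ => x + s • (y - x) := by fun_prop
  have hderiv : ∀ s : ℝ, HasDerivAt (fun s : ℝ => f (x + s • (y - x)))
      (f' (x + s • (y - x)) (y - x)) s := fun s => by
    have hline' : HasDerivAt (fun s : ℝ => x + s • (y - x)) (y - x) s := by
      simpa using ((hasDerivAt_id s).smul_const (y - x)).const_add x
    exact (hf _).comp_hasDerivAt s hline'
  rw [intervalIntegral.integral_eq_sub_of_hasDerivAt (fun s _ => hderiv s)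
    (((hf'.comp hline).clm_apply continuous_const).intervalIntegrable 0 1)]
  simp

lemma continuous_increment_of_hasFDerivAt_sub {F : E → ℝ} {φ : P → E → ℝ}
    {ψ' : P → E → E →L[ℝ] ℝ} (hF : Continuous F)
    (hψ : ∀ p x, HasFDerivAt (fun u => F u - φ p u) (ψ' p x) x)
    (hψ' : Continuous fun q : P × E => ψ' q.1 q.2) :
    Continuous fun q : P × E × E => φ q.1 q.2.2 - φ q.1 q.2.1 := by
  have hincr : ∀ q : P × E × E, φ q.1 q.2.2 - φ q.1 q.2.1 = F q.2.2 - F q.2.1 -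
      ∫ s in (0 : ℝ)..1, ψ' q.1 (q.2.1 + s • (q.2.2 - q.2.1)) (q.2.2 - q.2.1) := fun q => by
    rw [← sub_eq_integral_of_hasFDerivAt (hψ q.1)
      (hψ'.comp (continuous_const.prodMk continuous_id))]
    ring
  simp_rw [hincr]
  refine (hF.comp continuous_snd.snd).sub (hF.comp continuous_snd.fst) |>.sub ?_
  refine intervalIntegral.continuous_parametric_intervalIntegral_of_continuous' ?_ 0 1
  have hpath : Continuous fun r : (P × E × E) × ℝ =>
      (r.1.1, r.1.2.1 + r.2 • (r.1.2.2 - r.1.2.1)) := by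
    fun_prop
  exact (hψ'.comp hpath).clm_apply (by fun_prop)

lemma continuous_of_hasFDerivAt_sub {F φ : E → ℝ} {f' : E → E →L[ℝ] ℝ} (hφ : Continuous φ)
    (h : ∀ x, HasFDerivAt (fun u => F u - φ u) (f' x) x) : Continuous F :=
  ((continuous_iff_continuousAt.2 fun x => (h x).continuousAt).add hφ).congr
    fun x => sub_add_cancel (F x) (φ x)

end ParametricDifference

lemma Continuous.isSubgrad_of_tendsto {n ι P : Type*} [Fintype n] [TopologicalSpace P]
    {l : Filter ι} [l.NeBot] {φ : P → (n → ℝ) → ℝ}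
    (hφ : Continuous fun q : P × (n → ℝ) × (n → ℝ) => φ q.1 q.2.2 - φ q.1 q.2.1)
    {p : ι → P} {x g : ι → n → ℝ} {p₀ : P} {x₀ g₀ : n → ℝ}
    (hp : Tendsto p l (𝓝 p₀)) (hx : Tendsto x l (𝓝 x₀)) (hg : Tendsto g l (𝓝 g₀))
    (hsub : ∀ᶠ i in l, IsSubgrad (φ (p i)) (x i) (g i)) :
    IsSubgrad (φ p₀) x₀ g₀ := by
  intro y
  have hlin : Tendsto (fun i => g i ⬝ᵥ (y - x i)) l (𝓝 (g₀ ⬝ᵥ (y - x₀))) :=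
    ((continuous_fst.dotProduct (continuous_const.sub continuous_snd)).tendsto (g₀, x₀)).comp
      (hg.prodMk_nhds hx)
  have hincr : Tendsto (fun i => φ (p i) y - φ (p i) (x i)) l (𝓝 (φ p₀ y - φ p₀ x₀)) :=
    (hφ.tendsto (p₀, x₀, y)).comp (hp.prodMk_nhds (hx.prodMk_nhds tendsto_const_nhds))
  have := le_of_tendsto_of_tendsto hlin hincr (hsub.mono fun i hi => by linarith [hi y])
  linarith

/-- Convergence of `(t, ℓ) ↦ f t ℓ` along `concatAtTop L` is convergence of the concatenated
sequence of inner-loop iterates `f t ℓ`, `ℓ ≤ L t`. -/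
def concatAtTop (L : ℕ → ℕ) : Filter (ℕ × ℕ) :=
  comap Prod.fst atTop ⊓ 𝓟 {p | p.2 ≤ L p.1}

section ConcatAtTop

variable {L : ℕ → ℕ}

lemma eventually_concatAtTop {P : ℕ × ℕ → Prop} :
    (∀ᶠ p in concatAtTop L, P p) ↔ ∃ N, ∀ t ≥ N, ∀ ℓ ≤ L t, P (t, ℓ) := by
  simp only [concatAtTop, eventually_inf_principal, eventually_comap, eventually_atTop,
    Set.mem_ofPred_eq, Prod.forall]
  constructor
  · rintro ⟨N, hN⟩
    exact ⟨N, fun t ht ℓ hℓ => hN t ht t ℓ rfl hℓ⟩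
  · rintro ⟨N, hN⟩
    exact ⟨N, fun t ht _ ℓ hs hℓ => hs ▸ hN t ht ℓ (hs ▸ hℓ)⟩

lemma tendsto_concatAtTop_pred :
    Tendsto (fun p : ℕ × ℕ => (p.1, p.2 - 1)) (concatAtTop L) (concatAtTop L) := fun _ hs => by
  obtain ⟨N, hN⟩ := eventually_concatAtTop.1 hs
  exact eventually_concatAtTop.2 ⟨N, fun t ht ℓ hℓ => hN t ht _ ((ℓ.sub_le 1).trans hℓ)⟩

lemma tendsto_concatAtTop_last : Tendsto (fun t => (t, L t)) atTop (concatAtTop L) :=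
  fun _ hs => by
    obtain ⟨N, hN⟩ := eventually_concatAtTop.1 hs
    exact eventually_atTop.2 ⟨N, fun t ht => hN t ht _ le_rfl⟩

lemma tendsto_concatAtTop_of_e2 {n : Type*} [Fintype n] {f : ℕ → ℕ → n → ℝ} {c : n → ℝ}
    (h : ∀ ε : ℝ, 0 < ε → ∃ N, ∀ t, N ≤ t → ∀ ℓ, ℓ ≤ L t → e2 (f t ℓ - c) < ε) :
    Tendsto (Function.uncurry f) (concatAtTop L) (𝓝 c) :=
  Metric.tendsto_nhds.2 fun ε hε => by
    obtain ⟨N, hN⟩ := h ε hε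
    exact eventually_concatAtTop.2 ⟨N, fun t ht ℓ hℓ =>
      (dist_eq_norm _ _).trans_lt ((norm_le_e2 _).trans_lt (hN t ht ℓ hℓ))⟩

/-- The averages over the inner loops converge because every closed ball is convex. -/
lemma tendsto_average_of_tendsto_concatAtTop {E : Type*} [SeminormedAddCommGroup E]
    [NormedSpace ℝ E] {f : ℕ → ℕ → E} {c : E} (hL : ∀ᶠ t in atTop, 1 ≤ L t)
    (hf : Tendsto (Function.uncurry f) (concatAtTop L) (𝓝 c)) :
    Tendsto (fun t => (L t : ℝ)⁻¹ • ∑ ℓ ∈ Finset.Icc 1 (L t), f t ℓ) atTop (𝓝 c) := by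
  refine Metric.nhds_basis_closedBall.tendsto_right_iff.2 fun ε hε => ?_
  obtain ⟨N, hN⟩ :=
    eventually_concatAtTop.1 (Metric.nhds_basis_closedBall.tendsto_right_iff.1 hf ε hε)
  filter_upwards [hL, eventually_ge_atTop N] with t hLt ht
  rw [Finset.smul_sum]
  refine (convex_closedBall c ε).sum_mem (fun _ _ => by positivity) ?_
    fun ℓ hℓ => hN t ht ℓ (Finset.mem_Icc.1 hℓ).2
  rw [Finset.sum_const, Nat.card_Icc, Nat.add_sub_cancel, nsmul_eq_mul,
    mul_inv_cancel₀ (Nat.cast_ne_zero.2 (by omega))]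

end ConcatAtTop

theorem mocca_theorem1_general
    (d m : ℕ) (K : Matrix (Fin m) (Fin d) ℝ)
    (F : (Fin m → ℝ) → ℝ) (G : (Fin d → ℝ) → ℝ)
    (Fv : (Fin m → ℝ) → (Fin m → ℝ) → ℝ) (Gz : (Fin d → ℝ) → (Fin d → ℝ) → ℝ)
    (gradF : (Fin m → ℝ) → (Fin m → ℝ) → Fin m → ℝ)
    (gradG : (Fin d → ℝ) → (Fin d → ℝ) → Fin d → ℝ)
    -- standing conditions (4): F_v, G_z convex and continuous, F − F_v and G − G_z
    -- differentiable with gradients gradF, gradG vanishing at the expansion point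
    (hFvcont : ∀ v', Continuous (Fv v'))
    (hGzcont : ∀ z', Continuous (Gz z'))
    (hFdiff : ∀ v' w', HasFDerivAt (fun u => F u - Fv v' u) (dotCLM (gradF v' w')) w')
    (hGdiff : ∀ z' x', HasFDerivAt (fun u => G u - Gz z' u) (dotCLM (gradG z' x')) x')
    -- joint continuity (22)
    (hFjc : Continuous fun p : (Fin m → ℝ) × (Fin m → ℝ) => gradF p.1 p.2)
    (hGjc : Continuous fun p : (Fin d → ℝ) × (Fin d → ℝ) => gradG p.1 p.2)
    -- step sizes: θ ∈ [0,1], Σ, T diagonal with positive diagonal entries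
    (θ : ℝ)
    (σv : Fin m → ℝ) (τv : Fin d → ℝ)
    -- inner-loop lengths L_1, L_2, … ≥ 1
    (L : ℕ → ℕ) (hL : ∀ t, 1 ≤ t → 1 ≤ L t)
    -- iterates of Algorithm 2
    (x z : ℕ → Fin d → ℝ) (v : ℕ → Fin m → ℝ)
    (xi : ℕ → ℕ → Fin d → ℝ) (wi : ℕ → ℕ → Fin m → ℝ)
    -- (ii) primal update
    (hx : ∀ t ℓ, 1 ≤ ℓ → ℓ ≤ L (t + 1) →
      IsSubgrad (Gz (z t)) (xi (t + 1) ℓ)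
        ((Matrix.diagonal τv)⁻¹.mulVec (xi (t + 1) (ℓ - 1) - xi (t + 1) ℓ)
          - Kᵀ.mulVec (wi (t + 1) (ℓ - 1))))
    -- (iii) dual update, with extrapolation x̄ = x_ℓ + θ(x_ℓ − x_{ℓ−1})
    (hw : ∀ t ℓ, 1 ≤ ℓ → ℓ ≤ L (t + 1) →
      IsSubgrad (Fv (v t))
        ((Matrix.diagonal σv)⁻¹.mulVec (wi (t + 1) (ℓ - 1) - wi (t + 1) ℓ)
          + K.mulVec (xi (t + 1) ℓ + θ • (xi (t + 1) ℓ - xi (t + 1) (ℓ - 1))))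
        (wi (t + 1) ℓ))
    -- (iv) averaged updates of iterates and expansion points
    (hxavg : ∀ t, x (t + 1) = (L (t + 1) : ℝ)⁻¹ • ∑ ℓ ∈ Finset.Icc 1 (L (t + 1)), xi (t + 1) ℓ)
    (hzavg : ∀ t, z (t + 1) = x (t + 1))
    (hvavg : ∀ t, v (t + 1) = (L (t + 1) : ℝ)⁻¹ • ∑ ℓ ∈ Finset.Icc 1 (L (t + 1)),
      ((Matrix.diagonal σv)⁻¹.mulVec (wi (t + 1) (ℓ - 1) - wi (t + 1) ℓ)
        + K.mulVec (xi (t + 1) ℓ + θ • (xi (t + 1) ℓ - xi (t + 1) (ℓ - 1)))))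
    -- convergence of the (concatenated) iterate sequences and of the expansion points
    (xhat zhat : Fin d → ℝ) (what vhat : Fin m → ℝ)
    (hxconv : ∀ ε : ℝ, 0 < ε → ∃ N, ∀ t, N ≤ t → ∀ ℓ, ℓ ≤ L t → e2 (xi t ℓ - xhat) < ε)
    (hwconv : ∀ ε : ℝ, 0 < ε → ∃ N, ∀ t, N ≤ t → ∀ ℓ, ℓ ≤ L t → e2 (wi t ℓ - what) < ε)
    (hzconv : Filter.Tendsto z Filter.atTop (nhds zhat))
    (hvconv : Filter.Tendsto v Filter.atTop (nhds vhat)) :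
    -- conclusion: x̂ is a critical point, 0 ∈ Kᵀ∂F_{Kx̂}(Kx̂) + ∂G_{x̂}(x̂)
    ∃ (a : Fin m → ℝ) (b : Fin d → ℝ),
      IsSubgrad (Fv (K.mulVec xhat)) (K.mulVec xhat) a ∧
      IsSubgrad (Gz xhat) xhat b ∧
      Kᵀ.mulVec a + b = 0 := by
  have hshift : Tendsto (· + 1) atTop atTop := tendsto_add_atTop_nat 1
  have hpred := tendsto_concatAtTop_pred (L := L)
  have hlast := (tendsto_concatAtTop_last (L := L)).comp hshift
  have hL_eventually : ∀ᶠ t in atTop, 1 ≤ L t := eventually_atTop.2 ⟨1, hL⟩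
  have hxU : Tendsto (Function.uncurry xi) (concatAtTop L) (𝓝 xhat) :=
    tendsto_concatAtTop_of_e2 hxconv
  have hwU : Tendsto (Function.uncurry wi) (concatAtTop L) (𝓝 what) :=
    tendsto_concatAtTop_of_e2 hwconv
  have hdual : Tendsto (Function.uncurry fun t ℓ =>
      (Matrix.diagonal σv)⁻¹.mulVec (wi t (ℓ - 1) - wi t ℓ)
        + K.mulVec (xi t ℓ + θ • (xi t ℓ - xi t (ℓ - 1))))
      (concatAtTop L) (𝓝 (K.mulVec xhat)) := by
    simpa [Function.uncurry_def] using (((hwU.comp hpred).sub hwU).const_mulVec _).add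
      ((hxU.add ((hxU.sub (hxU.comp hpred)).const_smul θ)).const_mulVec K)
  have hprimal : Tendsto (Function.uncurry fun t ℓ =>
      (Matrix.diagonal τv)⁻¹.mulVec (xi t (ℓ - 1) - xi t ℓ) - Kᵀ.mulVec (wi t (ℓ - 1)))
      (concatAtTop L) (𝓝 (-Kᵀ.mulVec what)) := by
    simpa [Function.uncurry_def] using
      (((hxU.comp hpred).sub hxU).const_mulVec _).sub ((hwU.comp hpred).const_mulVec Kᵀ)
  have hv : vhat = K.mulVec xhat := tendsto_nhds_unique (hvconv.comp hshift) <|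
    ((tendsto_average_of_tendsto_concatAtTop hL_eventually hdual).comp hshift).congr fun t =>
      (hvavg t).symm
  have hz : zhat = xhat := tendsto_nhds_unique (hzconv.comp hshift) <|
    ((tendsto_average_of_tendsto_concatAtTop hL_eventually hxU).comp hshift).congr fun t =>
      ((hzavg t).trans (hxavg t)).symm
  have hFincr := continuous_increment_of_hasFDerivAt_sub
    (continuous_of_hasFDerivAt_sub (hFvcont 0) (hFdiff 0)) hFdiff hFjc.dotCLM
  have hGincr := continuous_increment_of_hasFDerivAt_sub
    (continuous_of_hasFDerivAt_sub (hGzcont 0) (hGdiff 0)) hGdiff hGjc.dotCLM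
  have ha : IsSubgrad (Fv vhat) (K.mulVec xhat) what :=
    hFincr.isSubgrad_of_tendsto hvconv (hdual.comp hlast) (hwU.comp hlast)
      (Eventually.of_forall fun t => hw t _ (hL _ t.succ_pos) le_rfl)
  have hb : IsSubgrad (Gz zhat) xhat (-Kᵀ.mulVec what) :=
    hGincr.isSubgrad_of_tendsto hzconv (hxU.comp hlast) (hprimal.comp hlast)
      (Eventually.of_forall fun t => hx t _ (hL _ t.succ_pos) le_rfl)
  exact ⟨what, -Kᵀ.mulVec what, hv ▸ ha, hz ▸ hb, by simp⟩

/-- **Theorem 1 of MOCCA (Barber–Sidky)**: if the (stable, inner-loop) MOCCA algorithm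
converges to a point, then the limit is a critical point of the original problem. -/
theorem mocca_theorem1
    (d m : ℕ) (K : Matrix (Fin m) (Fin d) ℝ)
    (F : (Fin m → ℝ) → ℝ) (G : (Fin d → ℝ) → ℝ)
    (Fv : (Fin m → ℝ) → (Fin m → ℝ) → ℝ) (Gz : (Fin d → ℝ) → (Fin d → ℝ) → ℝ)
    (gradF : (Fin m → ℝ) → (Fin m → ℝ) → Fin m → ℝ)
    (gradG : (Fin d → ℝ) → (Fin d → ℝ) → Fin d → ℝ)
    -- standing conditions (4): F_v, G_z convex and continuous, F − F_v and G − G_z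
    -- differentiable with gradients gradF, gradG vanishing at the expansion point
    (hFvconv : ∀ v', ConvexOn ℝ Set.univ (Fv v'))
    (hFvcont : ∀ v', Continuous (Fv v'))
    (hGzconv : ∀ z', ConvexOn ℝ Set.univ (Gz z'))
    (hGzcont : ∀ z', Continuous (Gz z'))
    (hFdiff : ∀ v' w', HasFDerivAt (fun u => F u - Fv v' u) (dotCLM (gradF v' w')) w')
    (hGdiff : ∀ z' x', HasFDerivAt (fun u => G u - Gz z' u) (dotCLM (gradG z' x')) x')
    (hFfo : ∀ v', gradF v' v' = 0)
    (hGfo : ∀ z', gradG z' z' = 0)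
    -- joint continuity (22)
    (hFjc : Continuous fun p : (Fin m → ℝ) × (Fin m → ℝ) => gradF p.1 p.2)
    (hGjc : Continuous fun p : (Fin d → ℝ) × (Fin d → ℝ) => gradG p.1 p.2)
    -- step sizes: θ ∈ [0,1], Σ, T diagonal with positive diagonal entries
    (θ : ℝ) (hθ0 : 0 ≤ θ) (hθ1 : θ ≤ 1)
    (σv : Fin m → ℝ) (τv : Fin d → ℝ) (hσ : ∀ i, 0 < σv i) (hτ : ∀ i, 0 < τv i)
    -- inner-loop lengths L_1, L_2, … ≥ 1
    (L : ℕ → ℕ) (hL : ∀ t, 1 ≤ t → 1 ≤ L t)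
    -- iterates of Algorithm 2
    (x z : ℕ → Fin d → ℝ) (w v : ℕ → Fin m → ℝ)
    (xi : ℕ → ℕ → Fin d → ℝ) (wi : ℕ → ℕ → Fin m → ℝ)
    -- (i) initialization of each inner loop
    (hinit : ∀ t, xi (t + 1) 0 = x t ∧ wi (t + 1) 0 = w t)
    -- (ii) primal update
    (hx : ∀ t ℓ, 1 ≤ ℓ → ℓ ≤ L (t + 1) →
      IsSubgrad (Gz (z t)) (xi (t + 1) ℓ)
        ((Matrix.diagonal τv)⁻¹.mulVec (xi (t + 1) (ℓ - 1) - xi (t + 1) ℓ)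
          - Kᵀ.mulVec (wi (t + 1) (ℓ - 1))))
    -- (iii) dual update, with extrapolation x̄ = x_ℓ + θ(x_ℓ − x_{ℓ−1})
    (hw : ∀ t ℓ, 1 ≤ ℓ → ℓ ≤ L (t + 1) →
      IsSubgrad (Fv (v t))
        ((Matrix.diagonal σv)⁻¹.mulVec (wi (t + 1) (ℓ - 1) - wi (t + 1) ℓ)
          + K.mulVec (xi (t + 1) ℓ + θ • (xi (t + 1) ℓ - xi (t + 1) (ℓ - 1))))
        (wi (t + 1) ℓ))
    -- (iv) averaged updates of iterates and expansion points
    (hxavg : ∀ t, x (t + 1) = (L (t + 1) : ℝ)⁻¹ • ∑ ℓ ∈ Finset.Icc 1 (L (t + 1)), xi (t + 1) ℓ)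
    (hwavg : ∀ t, w (t + 1) = (L (t + 1) : ℝ)⁻¹ • ∑ ℓ ∈ Finset.Icc 1 (L (t + 1)), wi (t + 1) ℓ)
    (hzavg : ∀ t, z (t + 1) = x (t + 1))
    (hvavg : ∀ t, v (t + 1) = (L (t + 1) : ℝ)⁻¹ • ∑ ℓ ∈ Finset.Icc 1 (L (t + 1)),
      ((Matrix.diagonal σv)⁻¹.mulVec (wi (t + 1) (ℓ - 1) - wi (t + 1) ℓ)
        + K.mulVec (xi (t + 1) ℓ + θ • (xi (t + 1) ℓ - xi (t + 1) (ℓ - 1)))))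
    -- convergence of the (concatenated) iterate sequences and of the expansion points
    (xhat zhat : Fin d → ℝ) (what vhat : Fin m → ℝ)
    (hxconv : ∀ ε : ℝ, 0 < ε → ∃ N, ∀ t, N ≤ t → ∀ ℓ, ℓ ≤ L t → e2 (xi t ℓ - xhat) < ε)
    (hwconv : ∀ ε : ℝ, 0 < ε → ∃ N, ∀ t, N ≤ t → ∀ ℓ, ℓ ≤ L t → e2 (wi t ℓ - what) < ε)
    (hzconv : Filter.Tendsto z Filter.atTop (nhds zhat))
    (hvconv : Filter.Tendsto v Filter.atTop (nhds vhat)) :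
    -- conclusion: x̂ is a critical point, 0 ∈ Kᵀ∂F_{Kx̂}(Kx̂) + ∂G_{x̂}(x̂)
    ∃ (a : Fin m → ℝ) (b : Fin d → ℝ),
      IsSubgrad (Fv (K.mulVec xhat)) (K.mulVec xhat) a ∧
      IsSubgrad (Gz xhat) xhat b ∧
      Kᵀ.mulVec a + b = 0 :=
  mocca_theorem1_general d m K F G Fv Gz gradF gradG hFvcont hGzcont hFdiff hGdiff hFjc hGjc θ σv τv
    L hL x z v xi wi hx hw hxavg hzavg hvavg xhat zhat what vhat hxconv hwconv hzconv hvconv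

end
end

section
/- Contraction of expansion points for the convex approximation (Lemma 1). Suppose Assumptions 1 and 2 hold. Define Θ := blockdiag(Θ_G, Θ_F) + (C_cvx/C_matrix²)·I, a positive definite matrix on ℝ^{d+m}. Then there exist constants C_contr > 0 and C_excess < ∞, depending only on C_matrix, C_cvx, C_Lip, C_grad, such that the following holds. Let x* ∈ S be a critical point: there exists w* ∈ ∂F_{Kx*}(Kx*) with −Kᵀw* a subgradient of G_{x*} at x* relative to S. For any expansion points (z, v) with ‖z‖_restrict ≤ R, let x*_{z,v} ∈ S be a minimizer of x ↦ F_v(Kx) + G_z(x) over S, and let w*_{z,v} ∈ ∂F_v(K x*_{z,v}) be such that −Kᵀw*_{z,v} is a subgradient of G_z at x*_{z,v} relative to S. Then ‖(x*_{z,v} − x*, K x*_{z,v} − K x*)‖_Θ ≤ (1 − C_contr)·‖(z − x*, v − K x*)‖_Θ + C_excess·τR, and ‖(x*_{z,v} − x*, w*_{z,v} − w*)‖₂ ≤ C_Lip + C_excess·(‖(z − x*, v − K x*)‖_Θ + τR). -/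
open Matrix

noncomputable section

/-- The norm `‖x‖_A = √(xᵀ A x)` associated to a positive semidefinite matrix `A`. -/
def qnorm {n : Type*} [Fintype n] (A : Matrix n n ℝ) (x : n → ℝ) : ℝ :=
  Real.sqrt (x ⬝ᵥ A.mulVec x)

/-- Euclidean operator norm of a matrix. -/
def opNorm {p q : Type*} [Fintype p] [Fintype q] [DecidableEq q] (A : Matrix p q ℝ) : ℝ :=
  ‖LinearMap.toContinuousLinearMap (Matrix.toEuclideanLin A)‖

/-- `g` is a subgradient of `φ` at `x` relative to the set `S`. -/
def IsSubgradOn {n : Type*} [Fintype n] (S : Set (n → ℝ)) (φ : (n → ℝ) → ℝ) (x g : n → ℝ) :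
    Prop :=
  x ∈ S ∧ ∀ y ∈ S, φ x + g ⬝ᵥ (y - x) ≤ φ y

/-- The block matrix `M = [[T⁻¹, −Kᵀ], [−K, Σ⁻¹]]` of Assumption 1, where `T = diagonal τv`
and `Σ = diagonal σv`. -/
def Mblock {d m : ℕ} (K : Matrix (Fin m) (Fin d) ℝ) (τv : Fin d → ℝ) (σv : Fin m → ℝ) :
    Matrix (Fin d ⊕ Fin m) (Fin d ⊕ Fin m) ℝ :=
  Matrix.fromBlocks (Matrix.diagonal τv)⁻¹ (-Kᵀ) (-K) (Matrix.diagonal σv)⁻¹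

/-- The matrix `Θ = blockdiag(Θ_G, Θ_F) + c·I`. -/
def thetaMat {d m : ℕ} (ΘG : Matrix (Fin d) (Fin d) ℝ) (ΘF : Matrix (Fin m) (Fin m) ℝ)
    (c : ℝ) : Matrix (Fin d ⊕ Fin m) (Fin d ⊕ Fin m) ℝ :=
  Matrix.fromBlocks ΘG 0 0 ΘF + c • 1

/-!
Write `Δx = x*_{z,v} - x*`. Moving the optimality condition of `x*` from the model
`(F_{Kx*}, G_{x*})` to the model `(F_v, G_z)` adds the gradient errors `∇(F - F_v)(Kx*)` and
`∇(G - G_z)(x*)` to the subgradients. Adding the strong monotonicity inequalities (a) and (d)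
between `x*` and `x*_{z,v}`, the dual variables cancel (`⟨KΔx, Δw⟩ = ⟨Δx, KᵀΔw⟩`) and only
the gradient errors remain; (b) and (e) bound them by half the `Θ_F`/`Θ_G`-norms of `KΔx`, `Δx`
and of `(z - x*, v - Kx*)`, and total convexity (f) turns the result into
`‖KΔx‖²_{Θ_F} + ‖Δx‖²_{Θ_G} + 2 C_cvx ‖Δx‖² ≤ ‖v - Kx*‖²_{Θ_F} + ‖z - x*‖²_{Θ_G} + 24 τ²R²`.
On the left, `2 C_cvx ‖Δx‖²` dominates the `c·I` part of `Θ` (`c = C_cvx / C²`, `‖K‖ ≤ C`); on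
the right, the `Θ_F`, `Θ_G` part is at most a fraction `C / (C + c)` of the full `Θ`-norm. The
dual bound follows from (c), using (b) once more to bound `‖∇(F - F_v)(Kx*)‖ ≤ C ‖v - Kx*‖`.
-/

open scoped Matrix.Norms.L2Operator

section Euclidean

variable {n p : Type*} [Fintype n] [Fintype p]

lemma dotProduct_self_nonneg (x : n → ℝ) : 0 ≤ x ⬝ᵥ x := by
  simpa using dotProduct_star_self_nonneg x

lemma e2_eq_norm (x : n → ℝ) : e2 x = ‖WithLp.toLp 2 x‖ := by
  rw [EuclideanSpace.norm_eq, e2, dotProduct]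
  simp [sq]

lemma e2_nonneg (x : n → ℝ) : 0 ≤ e2 x := Real.sqrt_nonneg _

lemma e2_sq (x : n → ℝ) : e2 x ^ 2 = x ⬝ᵥ x := Real.sq_sqrt (dotProduct_self_nonneg x)

lemma e2_le_iff {x : n → ℝ} {a : ℝ} (ha : 0 ≤ a) : e2 x ≤ a ↔ x ⬝ᵥ x ≤ a ^ 2 :=
  Real.sqrt_le_left ha

lemma e2_sub_le (x y : n → ℝ) : e2 (x - y) ≤ e2 x + e2 y := by
  simpa only [e2_eq_norm, WithLp.toLp_sub] using norm_sub_le _ _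

lemma e2_sub_comm (x y : n → ℝ) : e2 (x - y) = e2 (y - x) := by
  simp only [e2_eq_norm, WithLp.toLp_sub, norm_sub_rev]

lemma e2_of_isEmpty [IsEmpty n] (x : n → ℝ) : e2 x = 0 := by
  simp [e2, dotProduct]

lemma e2_sumElim_le (x : n → ℝ) (y : p → ℝ) : e2 (Sum.elim x y) ≤ e2 x + e2 y := by
  rw [e2_le_iff (add_nonneg (e2_nonneg x) (e2_nonneg y)), sumElim_dotProduct_sumElim,
    ← e2_sq x, ← e2_sq y]
  nlinarith [e2_nonneg x, e2_nonneg y]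

lemma dotProduct_le_e2_mul_e2 (x y : n → ℝ) : x ⬝ᵥ y ≤ e2 x * e2 y := by
  simpa [e2_eq_norm, EuclideanSpace.inner_eq_star_dotProduct, dotProduct_comm] using
    real_inner_le_norm (WithLp.toLp 2 x) (WithLp.toLp 2 y)

variable [DecidableEq n]

lemma opNorm_eq_norm (A : Matrix p n ℝ) : opNorm A = ‖A‖ := rfl

lemma opNorm_nonneg (A : Matrix p n ℝ) : 0 ≤ opNorm A := norm_nonneg _

lemma e2_mulVec_le (A : Matrix p n ℝ) (x : n → ℝ) : e2 (A *ᵥ x) ≤ opNorm A * e2 x := by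
  simpa [e2_eq_norm, opNorm_eq_norm] using Matrix.l2_opNorm_mulVec A (WithLp.toLp 2 x)

lemma dotProduct_mulVec_le_opNorm (A : Matrix n n ℝ) (x : n → ℝ) :
    x ⬝ᵥ A *ᵥ x ≤ opNorm A * (x ⬝ᵥ x) :=
  calc x ⬝ᵥ A *ᵥ x ≤ e2 x * e2 (A *ᵥ x) := dotProduct_le_e2_mul_e2 _ _
    _ ≤ e2 x * (opNorm A * e2 x) := mul_le_mul_of_nonneg_left (e2_mulVec_le A x) (e2_nonneg x)
    _ = opNorm A * (x ⬝ᵥ x) := by rw [← e2_sq]; ring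

lemma one_le_of_opNorm_le [Nonempty n] {A : Matrix n n ℝ} {C : ℝ} (hA : IsUnit A)
    (hC : opNorm A ≤ C) (hC' : opNorm A⁻¹ ≤ C) : 1 ≤ C := by
  have h : 1 ≤ opNorm A * opNorm A⁻¹ :=
    calc (1 : ℝ) = ‖(1 : Matrix n n ℝ)‖ := norm_one.symm
      _ = ‖A * A⁻¹‖ := by rw [Matrix.mul_nonsing_inv _ ((Matrix.isUnit_iff_isUnit_det A).1 hA)]
      _ ≤ opNorm A * opNorm A⁻¹ := Matrix.l2_opNorm_mul _ _
  have hC0 : 0 ≤ C := (opNorm_nonneg A).trans hC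
  nlinarith [mul_le_mul hC hC' (opNorm_nonneg A⁻¹) hC0]

lemma e2_le_of_abs_dotProduct_le {Θ : Matrix n n ℝ} {C : ℝ} {g w : n → ℝ} (hC : 0 < C)
    (hΘ : opNorm Θ ≤ C)
    (h : ∀ u, |u ⬝ᵥ g| ≤ 1 / 2 * (u ⬝ᵥ Θ *ᵥ u + w ⬝ᵥ Θ *ᵥ w)) : e2 g ≤ C * e2 w := by
  have hΘle : ∀ x, x ⬝ᵥ Θ *ᵥ x ≤ C * (x ⬝ᵥ x) := fun x =>
    (dotProduct_mulVec_le_opNorm Θ x).trans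
      (mul_le_mul_of_nonneg_right hΘ (dotProduct_self_nonneg x))
  have hu := (le_abs_self _).trans (h (C⁻¹ • g))
  simp only [Matrix.mulVec_smul, smul_dotProduct, dotProduct_smul, smul_eq_mul] at hu
  have hgΘ : C⁻¹ * (C⁻¹ * (g ⬝ᵥ Θ *ᵥ g)) ≤ C⁻¹ * (g ⬝ᵥ g) := by
    calc C⁻¹ * (C⁻¹ * (g ⬝ᵥ Θ *ᵥ g)) ≤ C⁻¹ * (C⁻¹ * (C * (g ⬝ᵥ g))) := by
          gcongr; exact hΘle g
      _ = C⁻¹ * (g ⬝ᵥ g) := by field_simp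
  have hgw : C⁻¹ * (g ⬝ᵥ g) ≤ C * (w ⬝ᵥ w) := by linarith [hΘle w]
  rw [e2_le_iff (mul_nonneg hC.le (e2_nonneg w)), mul_pow, e2_sq]
  calc g ⬝ᵥ g = C * (C⁻¹ * (g ⬝ᵥ g)) := by field_simp
    _ ≤ C * (C * (w ⬝ᵥ w)) := by gcongr
    _ = C ^ 2 * (w ⬝ᵥ w) := by ring

end Euclidean

section Subgradient

lemma isSubgradOn_univ_iff {n : Type*} [Fintype n] {φ : (n → ℝ) → ℝ} {x g : n → ℝ} :
    IsSubgradOn Set.univ φ x g ↔ IsSubgrad φ x g := by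
  simp [IsSubgradOn, IsSubgrad]

lemma le_of_hasDerivAt_of_sub_le_mul {f : ℝ → ℝ} {f' c : ℝ} (hf : HasDerivAt f f' 0)
    (h : ∀ t ∈ Set.Ioo (0 : ℝ) 1, f t - f 0 ≤ t * c) : f' ≤ c := by
  have hslope : Filter.Tendsto (slope f 0) (nhdsWithin 0 (Set.Ioi 0)) (nhds f') :=
    (hasDerivAt_iff_tendsto_slope.1 hf).mono_left (nhdsWithin_mono 0 fun t ht => ne_of_gt ht)
  refine le_of_tendsto hslope ?_
  filter_upwards [Ioo_mem_nhdsGT (zero_lt_one' ℝ)] with t ht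
  rw [slope_def_field, sub_zero, div_le_iff₀ ht.1, mul_comm]
  exact h t ht

lemma dotCLM_sub {n : ℕ} (g g' : Fin n → ℝ) : dotCLM g - dotCLM g' = dotCLM (g - g') := by
  ext x
  simp [dotCLM, sub_dotProduct]

/-- Differentiate `t ↦ (φ - φ₀)(x + t (y - x))` at `0⁺`: on the segment, convexity bounds `φ`
from above and the subgradient inequality bounds `φ₀` from below. -/
theorem IsSubgradOn.add_of_hasFDerivAt {n : ℕ} {S : Set (Fin n → ℝ)} {φ φ₀ : (Fin n → ℝ) → ℝ}
    {x g g' : Fin n → ℝ} (hφ : ConvexOn ℝ S φ)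
    (hd : HasFDerivAt (fun y => φ y - φ₀ y) (dotCLM g') x) (hg : IsSubgradOn S φ₀ x g) :
    IsSubgradOn S φ x (g + g') := by
  refine ⟨hg.1, fun y hy => ?_⟩
  have hline : HasDerivAt (fun t : ℝ => φ (x + t • (y - x)) - φ₀ (x + t • (y - x)))
      (g' ⬝ᵥ (y - x)) 0 := by
    have hpath : HasDerivAt (fun t : ℝ => x + t • (y - x)) (y - x) 0 := by
      simpa using ((hasDerivAt_id (0 : ℝ)).smul_const (y - x)).const_add x
    have hd0 : HasFDerivAt (fun y => φ y - φ₀ y) (dotCLM g') (x + (0 : ℝ) • (y - x)) := by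
      simpa using hd
    exact hd0.comp_hasDerivAt 0 hpath
  have hslope : g' ⬝ᵥ (y - x) ≤ φ y - φ x - g ⬝ᵥ (y - x) := by
    refine le_of_hasDerivAt_of_sub_le_mul hline fun t ht => ?_
    have hseg : x + t • (y - x) = (1 - t) • x + t • y := by module
    have hφseg := hφ.2 hg.1 hy (sub_nonneg.2 ht.2.le) ht.1.le (sub_add_cancel 1 t)
    have hφ₀seg := hg.2 _ (hφ.1.add_smul_sub_mem hg.1 hy ⟨ht.1.le, ht.2.le⟩)
    rw [← hseg, smul_eq_mul, smul_eq_mul] at hφseg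
    rw [add_sub_cancel_left, dotProduct_smul, smul_eq_mul] at hφ₀seg
    simp only [zero_smul, add_zero]
    nlinarith
  rw [add_dotProduct]
  linarith

theorem IsSubgradOn.move_expansion_point {n : ℕ} {S : Set (Fin n → ℝ)}
    {F : (Fin n → ℝ) → ℝ} {Φ : (Fin n → ℝ) → (Fin n → ℝ) → ℝ}
    {grad : (Fin n → ℝ) → (Fin n → ℝ) → Fin n → ℝ} {x v g : Fin n → ℝ}
    (hΦ : ConvexOn ℝ S (Φ v))
    (hdiff : ∀ v' w', HasFDerivAt (fun u => F u - Φ v' u) (dotCLM (grad v' w')) w')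
    (hgrad : grad x x = 0) (hg : IsSubgradOn S (Φ x) x g) :
    IsSubgradOn S (Φ v) x (g - grad v x) := by
  have hΦΦ : (fun u => Φ v u - Φ x u) = (fun u => F u - Φ x u) - fun u => F u - Φ v u := by
    funext u; simp only [Pi.sub_apply]; ring
  have hd := (hdiff x x).sub (hdiff v x)
  rw [← hΦΦ, dotCLM_sub, hgrad, zero_sub] at hd
  simpa only [sub_eq_add_neg] using hg.add_of_hasFDerivAt hΦ hd

end Subgradient

section Quadratic

variable {n : Type*} [Fintype n]

lemma quad_sub_comm (A : Matrix n n ℝ) (x y : n → ℝ) :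
    (x - y) ⬝ᵥ A *ᵥ (x - y) = (y - x) ⬝ᵥ A *ᵥ (y - x) := by
  rw [← neg_sub y x, Matrix.mulVec_neg, neg_dotProduct, dotProduct_neg, neg_neg]

lemma Matrix.PosSemidef.quad_nonneg {A : Matrix n n ℝ} (hA : A.PosSemidef) (x : n → ℝ) :
    0 ≤ x ⬝ᵥ A *ᵥ x := by
  simpa using hA.dotProduct_mulVec_nonneg x

lemma qnorm_of_isEmpty [IsEmpty n] (A : Matrix n n ℝ) (x : n → ℝ) : qnorm A x = 0 := by
  simp [qnorm, dotProduct]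

variable {d m : ℕ}

lemma quad_transpose_mul_mul_add (K : Matrix (Fin m) (Fin d) ℝ) (P : Matrix (Fin m) (Fin m) ℝ)
    (Q : Matrix (Fin d) (Fin d) ℝ) (x : Fin d → ℝ) :
    x ⬝ᵥ (Kᵀ * P * K + Q) *ᵥ x = K *ᵥ x ⬝ᵥ P *ᵥ (K *ᵥ x) + x ⬝ᵥ Q *ᵥ x := by
  rw [Matrix.add_mulVec, dotProduct_add, ← Matrix.mulVec_mulVec, ← Matrix.mulVec_mulVec,
    Matrix.dotProduct_mulVec, Matrix.vecMul_transpose]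

lemma quad_thetaMat (ΘG : Matrix (Fin d) (Fin d) ℝ) (ΘF : Matrix (Fin m) (Fin m) ℝ) (c : ℝ)
    (x : Fin d → ℝ) (w : Fin m → ℝ) :
    Sum.elim x w ⬝ᵥ thetaMat ΘG ΘF c *ᵥ Sum.elim x w
      = x ⬝ᵥ ΘG *ᵥ x + w ⬝ᵥ ΘF *ᵥ w + c * (x ⬝ᵥ x + w ⬝ᵥ w) := by
  simp [thetaMat, Matrix.add_mulVec, Matrix.fromBlocks_mulVec, Matrix.smul_mulVec, dotProduct_add,
    sumElim_dotProduct_sumElim]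

lemma e2_mulVec_le_opNorm_Mblock (K : Matrix (Fin m) (Fin d) ℝ) (τv : Fin d → ℝ)
    (σv : Fin m → ℝ) (x : Fin d → ℝ) : e2 (K *ᵥ x) ≤ opNorm (Mblock K τv σv) * e2 x := by
  have hM : Mblock K τv σv *ᵥ Sum.elim x 0
      = Sum.elim ((Matrix.diagonal τv)⁻¹ *ᵥ x) (-(K *ᵥ x)) := by
    simp [Mblock, Matrix.fromBlocks_mulVec, Matrix.neg_mulVec]
  have hx : e2 (Sum.elim x (0 : Fin m → ℝ)) = e2 x := by
    simp [e2, sumElim_dotProduct_sumElim]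
  calc e2 (K *ᵥ x) ≤ e2 (Mblock K τv σv *ᵥ Sum.elim x 0) := by
        rw [hM, e2, e2, sumElim_dotProduct_sumElim, neg_dotProduct, dotProduct_neg, neg_neg]
        exact Real.sqrt_le_sqrt (le_add_of_nonneg_left (dotProduct_self_nonneg _))
    _ ≤ opNorm (Mblock K τv σv) * e2 x := hx ▸ e2_mulVec_le _ _

end Quadratic

lemma sq_mul_seminorm_sub_le {E : Type*} [AddCommGroup E] [Module ℝ E] (nr : Seminorm ℝ E)
    (τ : ℝ) {R : ℝ} {x y : E} (hx : nr x ≤ R) (hy : nr y ≤ R) :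
    τ ^ 2 * nr (x - y) ^ 2 ≤ 4 * (τ * R) ^ 2 := by
  have h : nr (x - y) ≤ 2 * R := (map_sub_le_add nr x y).trans (by linarith)
  have h2 : nr (x - y) ^ 2 ≤ (2 * R) ^ 2 := pow_le_pow_left₀ (apply_nonneg nr _) h 2
  nlinarith [mul_le_mul_of_nonneg_left h2 (sq_nonneg τ)]

theorem displacement_le_expansion_error {d m : ℕ} {K : Matrix (Fin m) (Fin d) ℝ}
    {ΛF ΘF : Matrix (Fin m) (Fin m) ℝ} {ΛG ΘG : Matrix (Fin d) (Fin d) ℝ}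
    {nr : Seminorm ℝ (Fin d → ℝ)} {R τ Ccvx : ℝ} {Fv : (Fin m → ℝ) → (Fin m → ℝ) → ℝ}
    {Gz : (Fin d → ℝ) → (Fin d → ℝ) → ℝ} {gradF : (Fin m → ℝ) → (Fin m → ℝ) → Fin m → ℝ}
    {gradG : (Fin d → ℝ) → (Fin d → ℝ) → Fin d → ℝ} {xstar z xzv : Fin d → ℝ}
    {wstar v wzv : Fin m → ℝ}
    (hFmono : ∀ v' w u a a', IsSubgrad (Fv v') (w + u) a → IsSubgrad (Fv v') w a' →
      u ⬝ᵥ ΛF *ᵥ u ≤ u ⬝ᵥ (a - a'))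
    (hFsmooth : ∀ v' w u, |u ⬝ᵥ gradF v' (v' + w)| ≤ 1 / 2 * (u ⬝ᵥ ΘF *ᵥ u + w ⬝ᵥ ΘF *ᵥ w))
    (hGmono : ∀ z' x y g g', IsSubgradOn {x | nr x ≤ R} (Gz z') (x + y) g →
      IsSubgradOn {x | nr x ≤ R} (Gz z') x g' →
      y ⬝ᵥ ΛG *ᵥ y - τ ^ 2 * nr y ^ 2 ≤ y ⬝ᵥ (g - g'))
    (hGsmooth : ∀ z' x y, |y ⬝ᵥ gradG z' (z' + x)| ≤
      1 / 2 * (x ⬝ᵥ ΘG *ᵥ x + y ⬝ᵥ ΘG *ᵥ y) + τ ^ 2 / 2 * (nr x ^ 2 + nr y ^ 2))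
    (hcvx : ∀ x, x ⬝ᵥ (Kᵀ * ΘF * K + ΘG) *ᵥ x + Ccvx * (x ⬝ᵥ x) - τ ^ 2 * nr x ^ 2
      ≤ x ⬝ᵥ (Kᵀ * ΛF * K + ΛG) *ᵥ x)
    (hxstar : nr xstar ≤ R) (hz : nr z ≤ R) (hxzv : nr xzv ≤ R)
    (hFstar : IsSubgrad (Fv v) (K *ᵥ xstar) (wstar - gradF v (K *ᵥ xstar)))
    (hGstar : IsSubgradOn {x | nr x ≤ R} (Gz z) xstar (-(Kᵀ *ᵥ wstar) - gradG z xstar))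
    (hF : IsSubgrad (Fv v) (K *ᵥ xzv) wzv)
    (hG : IsSubgradOn {x | nr x ≤ R} (Gz z) xzv (-(Kᵀ *ᵥ wzv))) :
    K *ᵥ (xzv - xstar) ⬝ᵥ ΘF *ᵥ (K *ᵥ (xzv - xstar)) + (xzv - xstar) ⬝ᵥ ΘG *ᵥ (xzv - xstar)
        + 2 * Ccvx * ((xzv - xstar) ⬝ᵥ (xzv - xstar))
      ≤ (v - K *ᵥ xstar) ⬝ᵥ ΘF *ᵥ (v - K *ᵥ xstar) + (z - xstar) ⬝ᵥ ΘG *ᵥ (z - xstar)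
        + 24 * (τ * R) ^ 2 := by
  set Δx := xzv - xstar
  have hFΔ := hFmono v (K *ᵥ xstar) (K *ᵥ Δx) _ _
    (by rwa [← Matrix.mulVec_add, add_sub_cancel]) hFstar
  have hGΔ := hGmono z xstar Δx _ _ (by rwa [add_sub_cancel]) hGstar
  have hcancel : K *ᵥ Δx ⬝ᵥ (wzv - (wstar - gradF v (K *ᵥ xstar)))
      + Δx ⬝ᵥ (-(Kᵀ *ᵥ wzv) - (-(Kᵀ *ᵥ wstar) - gradG z xstar))
      = K *ᵥ Δx ⬝ᵥ gradF v (K *ᵥ xstar) + Δx ⬝ᵥ gradG z xstar := by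
    simp only [Matrix.dotProduct_mulVec, Matrix.vecMul_transpose, dotProduct_sub,
      dotProduct_neg]
    ring
  have hFerr := (le_abs_self _).trans (hFsmooth v (K *ᵥ xstar - v) (K *ᵥ Δx))
  have hGerr := (le_abs_self _).trans (hGsmooth z (xstar - z) Δx)
  rw [add_sub_cancel] at hFerr hGerr
  rw [quad_sub_comm] at hFerr hGerr
  have hcvxΔ := hcvx Δx
  rw [quad_transpose_mul_mul_add, quad_transpose_mul_mul_add] at hcvxΔ
  have hr₁ := sq_mul_seminorm_sub_le nr τ hxzv hxstar
  have hr₂ := sq_mul_seminorm_sub_le nr τ hxstar hz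
  linarith

/-- `C_contr`, with `C = C_matrix`. -/
def moccaContr (C Ccvx : ℝ) : ℝ := 1 - √(C / (C + Ccvx / C ^ 2))

/-- `C_excess`, with `C = C_matrix`; the `5 ≥ √24` absorbs the `24 τ²R²` of
`displacement_le_expansion_error`. -/
def moccaExcess (C Ccvx Cgrad : ℝ) : ℝ := 5 + (5 * (1 + |Cgrad| * C) + C ^ 2) / √Ccvx

lemma moccaContr_pos {C Ccvx : ℝ} (hC : 0 < C) (hCcvx : 0 < Ccvx) : 0 < moccaContr C Ccvx := by
  have hρ : C / (C + Ccvx / C ^ 2) < 1 := (div_lt_one (by positivity)).2 (by simp; positivity)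
  rw [moccaContr, sub_pos, Real.sqrt_lt' one_pos, one_pow]
  exact hρ

lemma five_le_moccaExcess {C : ℝ} (hC : 0 ≤ C) (Ccvx Cgrad : ℝ) : 5 ≤ moccaExcess C Ccvx Cgrad := by
  rw [moccaExcess, le_add_iff_nonneg_right]
  positivity

section Bounds

variable {d m : ℕ} {K : Matrix (Fin m) (Fin d) ℝ} {ΘF : Matrix (Fin m) (Fin m) ℝ}
  {ΘG : Matrix (Fin d) (Fin d) ℝ} {C Ccvx t : ℝ} {x y : Fin d → ℝ} {w : Fin m → ℝ}

lemma qnorm_thetaMat_sq (hΘF : ΘF.PosSemidef) (hΘG : ΘG.PosSemidef) {c : ℝ} (hc : 0 ≤ c)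
    (y : Fin d → ℝ) (w : Fin m → ℝ) :
    qnorm (thetaMat ΘG ΘF c) (Sum.elim y w) ^ 2
      = y ⬝ᵥ ΘG *ᵥ y + w ⬝ᵥ ΘF *ᵥ w + c * (y ⬝ᵥ y + w ⬝ᵥ w) := by
  rw [qnorm, quad_thetaMat, Real.sq_sqrt]
  have := mul_nonneg hc (add_nonneg (dotProduct_self_nonneg y) (dotProduct_self_nonneg w))
  linarith [hΘF.quad_nonneg w, hΘG.quad_nonneg y]

theorem qnorm_thetaMat_contraction (Cgrad : ℝ) (hCcvx : 0 ≤ Ccvx) (hC : 1 ≤ C)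
    (hK : ∀ x, e2 (K *ᵥ x) ≤ C * e2 x) (hΘF : ΘF.PosSemidef) (hΘG : ΘG.PosSemidef)
    (hΘFC : opNorm ΘF ≤ C) (hΘGC : opNorm ΘG ≤ C) (ht : 0 ≤ t)
    (hkey : K *ᵥ x ⬝ᵥ ΘF *ᵥ (K *ᵥ x) + x ⬝ᵥ ΘG *ᵥ x + 2 * Ccvx * (x ⬝ᵥ x)
      ≤ w ⬝ᵥ ΘF *ᵥ w + y ⬝ᵥ ΘG *ᵥ y + 24 * t ^ 2) :
    qnorm (thetaMat ΘG ΘF (Ccvx / C ^ 2)) (Sum.elim x (K *ᵥ x))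
      ≤ (1 - moccaContr C Ccvx) * qnorm (thetaMat ΘG ΘF (Ccvx / C ^ 2)) (Sum.elim y w)
        + moccaExcess C Ccvx Cgrad * t := by
  set c := Ccvx / C ^ 2
  set ρ := C / (C + c)
  set N := qnorm (thetaMat ΘG ΘF c) (Sum.elim y w)
  have hC0 : 0 < C := one_pos.trans_le hC
  have hc : 0 ≤ c := by positivity
  have hxx := dotProduct_self_nonneg x
  have hKx : K *ᵥ x ⬝ᵥ K *ᵥ x ≤ C ^ 2 * (x ⬝ᵥ x) := by
    rw [← e2_sq, ← e2_sq, ← mul_pow]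
    exact pow_le_pow_left₀ (e2_nonneg _) (hK x) 2
  have hcx : c * (x ⬝ᵥ x + K *ᵥ x ⬝ᵥ K *ᵥ x) ≤ 2 * Ccvx * (x ⬝ᵥ x) := by
    have hcC : c ≤ Ccvx := div_le_self hCcvx (one_le_pow₀ hC)
    have hcC2 : c * (C ^ 2 * (x ⬝ᵥ x)) = Ccvx * (x ⬝ᵥ x) := by
      rw [← mul_assoc, div_mul_cancel₀ _ (by positivity)]
    nlinarith [mul_le_mul_of_nonneg_left hKx hc, mul_le_mul_of_nonneg_right hcC hxx]
  have hΘ : w ⬝ᵥ ΘF *ᵥ w + y ⬝ᵥ ΘG *ᵥ y ≤ C * (y ⬝ᵥ y + w ⬝ᵥ w) := by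
    nlinarith [dotProduct_mulVec_le_opNorm ΘF w, dotProduct_mulVec_le_opNorm ΘG y,
      mul_le_mul_of_nonneg_right hΘFC (dotProduct_self_nonneg w),
      mul_le_mul_of_nonneg_right hΘGC (dotProduct_self_nonneg y)]
  have hN := qnorm_thetaMat_sq hΘF hΘG hc y w
  have hρN : w ⬝ᵥ ΘF *ᵥ w + y ⬝ᵥ ΘG *ᵥ y ≤ ρ * N ^ 2 := by
    rw [div_mul_eq_mul_div, le_div_iff₀ (by positivity), hN]
    nlinarith [mul_le_mul_of_nonneg_left hΘ hc]
  have hN0 : 0 ≤ N := Real.sqrt_nonneg _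
  have hsq : qnorm (thetaMat ΘG ΘF c) (Sum.elim x (K *ᵥ x)) ≤ √ρ * N + 5 * t := by
    have hexpand : (√ρ * N + 5 * t) ^ 2 = ρ * N ^ 2 + 10 * (√ρ * N * t) + 25 * t ^ 2 := by
      rw [add_sq, mul_pow, Real.sq_sqrt (by positivity)]; ring
    rw [qnorm, quad_thetaMat, Real.sqrt_le_left (by positivity), hexpand]
    nlinarith [mul_nonneg (mul_nonneg (Real.sqrt_nonneg ρ) hN0) ht]
  rw [moccaContr, sub_sub_cancel]
  nlinarith [mul_le_mul_of_nonneg_right (five_le_moccaExcess hC0.le Ccvx Cgrad) ht]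

lemma sqrt_mul_e2_le_qnorm_add (hCcvx : 0 < Ccvx) (hΘF : ΘF.PosSemidef)
    (hΘG : ΘG.PosSemidef) (ht : 0 ≤ t)
    (hkey : K *ᵥ x ⬝ᵥ ΘF *ᵥ (K *ᵥ x) + x ⬝ᵥ ΘG *ᵥ x + 2 * Ccvx * (x ⬝ᵥ x)
      ≤ w ⬝ᵥ ΘF *ᵥ w + y ⬝ᵥ ΘG *ᵥ y + 24 * t ^ 2) :
    √Ccvx * e2 x ≤ qnorm (thetaMat ΘG ΘF (Ccvx / C ^ 2)) (Sum.elim y w) + 5 * t := by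
  have hN := qnorm_thetaMat_sq hΘF hΘG (c := Ccvx / C ^ 2) (by positivity) y w
  have hN0 : 0 ≤ qnorm (thetaMat ΘG ΘF (Ccvx / C ^ 2)) (Sum.elim y w) := Real.sqrt_nonneg _
  have hyw : 0 ≤ Ccvx / C ^ 2 * (y ⬝ᵥ y + w ⬝ᵥ w) :=
    mul_nonneg (by positivity) (add_nonneg (dotProduct_self_nonneg y) (dotProduct_self_nonneg w))
  rw [← sq_le_sq₀ (mul_nonneg (Real.sqrt_nonneg _) (e2_nonneg x)) (by positivity), mul_pow,
    Real.sq_sqrt hCcvx.le, e2_sq, add_sq, hN]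
  nlinarith [hΘF.quad_nonneg (K *ᵥ x), hΘG.quad_nonneg x, dotProduct_self_nonneg x,
    mul_nonneg hN0 ht]

lemma sqrt_mul_e2_le_mul_qnorm (hCcvx : 0 < Ccvx) (hC : 0 < C) (hΘF : ΘF.PosSemidef)
    (hΘG : ΘG.PosSemidef) :
    √Ccvx * e2 w ≤ C * qnorm (thetaMat ΘG ΘF (Ccvx / C ^ 2)) (Sum.elim y w) := by
  have hN := qnorm_thetaMat_sq hΘF hΘG (c := Ccvx / C ^ 2) (by positivity) y w
  have hN0 : 0 ≤ qnorm (thetaMat ΘG ΘF (Ccvx / C ^ 2)) (Sum.elim y w) := Real.sqrt_nonneg _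
  rw [← sq_le_sq₀ (mul_nonneg (Real.sqrt_nonneg _) (e2_nonneg w)) (mul_nonneg hC.le hN0),
    mul_pow, mul_pow,
    Real.sq_sqrt hCcvx.le, e2_sq, hN, mul_add, mul_add, ← mul_assoc (C ^ 2),
    mul_div_cancel₀ _ (by positivity)]
  nlinarith [hΘF.quad_nonneg w, hΘG.quad_nonneg y, dotProduct_self_nonneg y]

theorem e2_primal_dual_le {CLip Cgrad : ℝ} {a b g : Fin m → ℝ} (hCcvx : 0 < Ccvx) (hC : 0 < C)
    (hK : ∀ x, e2 (K *ᵥ x) ≤ C * e2 x) (hΘF : ΘF.PosSemidef) (hΘG : ΘG.PosSemidef)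
    (ht : 0 ≤ t)
    (hkey : K *ᵥ x ⬝ᵥ ΘF *ᵥ (K *ᵥ x) + x ⬝ᵥ ΘG *ᵥ x + 2 * Ccvx * (x ⬝ᵥ x)
      ≤ w ⬝ᵥ ΘF *ᵥ w + y ⬝ᵥ ΘG *ᵥ y + 24 * t ^ 2)
    (hLip : e2 (a - (b - g)) ≤ CLip + Cgrad * e2 (K *ᵥ x)) (hg : e2 g ≤ C * e2 w) :
    e2 (Sum.elim x (a - b))
      ≤ CLip + moccaExcess C Ccvx Cgrad
        * (qnorm (thetaMat ΘG ΘF (Ccvx / C ^ 2)) (Sum.elim y w) + t) := by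
  set N := qnorm (thetaMat ΘG ΘF (Ccvx / C ^ 2)) (Sum.elim y w)
  set A := 1 + |Cgrad| * C
  have hA : 0 ≤ A := by positivity
  have hN : 0 ≤ N := Real.sqrt_nonneg _
  have hs : 0 < √Ccvx := Real.sqrt_pos.2 hCcvx
  have htri : e2 (Sum.elim x (a - b)) ≤ CLip + A * e2 x + C * e2 w := by
    have hgrad : Cgrad * e2 (K *ᵥ x) ≤ |Cgrad| * (C * e2 x) :=
      mul_le_mul (le_abs_self _) (hK x) (e2_nonneg _) (abs_nonneg _)
    calc e2 (Sum.elim x (a - b)) ≤ e2 x + (e2 (a - (b - g)) + e2 g) := by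
          refine (e2_sumElim_le _ _).trans (add_le_add le_rfl ?_)
          have hab : a - b = a - (b - g) - g := by abel
          exact hab ▸ e2_sub_le (a - (b - g)) g
      _ ≤ CLip + A * e2 x + C * e2 w := by linarith
  have hx := sqrt_mul_e2_le_qnorm_add (C := C) hCcvx hΘF hΘG ht hkey
  have hw := sqrt_mul_e2_le_mul_qnorm (y := y) (w := w) hCcvx hC hΘF hΘG
  have hsum : A * e2 x + C * e2 w ≤ (5 * A + C ^ 2) / √Ccvx * (N + t) := by
    rw [div_mul_eq_mul_div, le_div_iff₀ hs]
    nlinarith [mul_le_mul_of_nonneg_left hx hA, mul_le_mul_of_nonneg_left hw hC.le,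
      mul_nonneg hA hN, mul_nonneg hA ht, mul_nonneg (sq_nonneg C) ht]
  have hexcess : (5 * A + C ^ 2) / √Ccvx * (N + t) ≤ moccaExcess C Ccvx Cgrad * (N + t) := by
    rw [moccaExcess]
    nlinarith [add_nonneg hN ht]
  linarith

end Bounds

/-- **Lemma 1 of MOCCA (Barber–Sidky)**: contraction of expansion points for the convex
approximation. -/
theorem mocca_lemma1 (Cmat Ccvx CLip Cgrad : ℝ) (hCcvx : 0 < Ccvx) :
    ∃ Ccontr : ℝ, 0 < Ccontr ∧ ∃ Cexcess : ℝ,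
      ∀ (d m : ℕ) (K : Matrix (Fin m) (Fin d) ℝ)
        (F : (Fin m → ℝ) → ℝ) (G : (Fin d → ℝ) → ℝ)
        (Fv : (Fin m → ℝ) → (Fin m → ℝ) → ℝ) (Gz : (Fin d → ℝ) → (Fin d → ℝ) → ℝ)
        (gradF : (Fin m → ℝ) → (Fin m → ℝ) → Fin m → ℝ)
        (gradG : (Fin d → ℝ) → (Fin d → ℝ) → Fin d → ℝ)
        (nr : Seminorm ℝ (Fin d → ℝ)) (R τ : ℝ)
        (σv : Fin m → ℝ) (τv : Fin d → ℝ)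
        (ΛF ΘF : Matrix (Fin m) (Fin m) ℝ) (ΛG ΘG : Matrix (Fin d) (Fin d) ℝ)
        (xstar z xzv : Fin d → ℝ) (wstar v wzv : Fin m → ℝ),
        0 < R → 0 ≤ τ →
        -- standing conditions (4) on the local convex approximations
        (∀ v', ConvexOn ℝ Set.univ (Fv v')) →
        (∀ v', Continuous (Fv v')) →
        (∀ z', ConvexOn ℝ {x | nr x ≤ R} (Gz z')) →
        (∀ v' w', HasFDerivAt (fun u => F u - Fv v' u) (dotCLM (gradF v' w')) w') →
        (∀ z' x', HasFDerivAt (fun u => G u - Gz z' u) (dotCLM (gradG z' x')) x') →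
        (∀ v', gradF v' v' = 0) →
        (∀ z', gradG z' z' = 0) →
        -- Assumption 1
        (∀ i, 0 < σv i) → (∀ i, 0 < τv i) →
        (Mblock K τv σv).PosDef →
        -- Assumption 2
        ΛF.PosSemidef → ΘF.PosSemidef → ΛG.PosSemidef → ΘG.PosSemidef →
        -- (a) strong convexity of F_v
        (∀ v' w u a a', IsSubgrad (Fv v') (w + u) a → IsSubgrad (Fv v') w a' →
          u ⬝ᵥ ΛF.mulVec u ≤ u ⬝ᵥ (a - a')) →
        -- (b) smoothness of F − F_v
        (∀ v' w u, |u ⬝ᵥ gradF v' (v' + w)| ≤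
          (1 / 2) * (u ⬝ᵥ ΘF.mulVec u + w ⬝ᵥ ΘF.mulVec w)) →
        -- (c) gradient condition on F_v
        (∀ v' w w' a a', IsSubgrad (Fv v') w a → IsSubgrad (Fv v') w' a' →
          e2 (a - a') ≤ CLip + Cgrad * e2 (w - w')) →
        -- (d) restricted strong convexity of G_z
        (∀ z' x y g g', IsSubgradOn {x | nr x ≤ R} (Gz z') (x + y) g →
          IsSubgradOn {x | nr x ≤ R} (Gz z') x g' →
          y ⬝ᵥ ΛG.mulVec y - τ ^ 2 * (nr y) ^ 2 ≤ y ⬝ᵥ (g - g')) →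
        -- (e) restricted smoothness of G − G_z
        (∀ z' x y, |y ⬝ᵥ gradG z' (z' + x)| ≤
          (1 / 2) * (x ⬝ᵥ ΘG.mulVec x + y ⬝ᵥ ΘG.mulVec y)
            + (τ ^ 2 / 2) * ((nr x) ^ 2 + (nr y) ^ 2)) →
        -- (f) total convexity
        (∀ x, x ⬝ᵥ (Kᵀ * ΘF * K + ΘG).mulVec x + Ccvx * (x ⬝ᵥ x) - τ ^ 2 * (nr x) ^ 2
          ≤ x ⬝ᵥ (Kᵀ * ΛF * K + ΛG).mulVec x) →
        -- C_matrix is the max of the operator norms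
        Cmat = max (opNorm ΛF) (max (opNorm ΘF) (max (opNorm ΛG) (max (opNorm ΘG)
          (max (opNorm (Mblock K τv σv)) (opNorm (Mblock K τv σv)⁻¹))))) →
        -- x* ∈ S is a critical point with dual certificate w*
        nr xstar ≤ R →
        IsSubgrad (Fv (K.mulVec xstar)) (K.mulVec xstar) wstar →
        IsSubgradOn {x | nr x ≤ R} (Gz xstar) xstar (-(Kᵀ.mulVec wstar)) →
        -- expansion points (z, v) with ‖z‖_restrict ≤ R, and the minimizer x*_{z,v} with w*_{z,v}
        nr z ≤ R →
        nr xzv ≤ R →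
        (∀ y, nr y ≤ R → Fv v (K.mulVec xzv) + Gz z xzv ≤ Fv v (K.mulVec y) + Gz z y) →
        IsSubgrad (Fv v) (K.mulVec xzv) wzv →
        IsSubgradOn {x | nr x ≤ R} (Gz z) xzv (-(Kᵀ.mulVec wzv)) →
        -- conclusions
        qnorm (thetaMat ΘG ΘF (Ccvx / Cmat ^ 2))
            (Sum.elim (xzv - xstar) (K.mulVec xzv - K.mulVec xstar))
          ≤ (1 - Ccontr) * qnorm (thetaMat ΘG ΘF (Ccvx / Cmat ^ 2))
              (Sum.elim (z - xstar) (v - K.mulVec xstar))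
            + Cexcess * (τ * R)
        ∧ e2 (Sum.elim (xzv - xstar) (wzv - wstar))
          ≤ CLip + Cexcess * (qnorm (thetaMat ΘG ΘF (Ccvx / Cmat ^ 2))
              (Sum.elim (z - xstar) (v - K.mulVec xstar)) + τ * R) := by
  -- `max Cmat 1 = Cmat` unless `d = m = 0`, where all the norms vanish
  refine ⟨moccaContr (max Cmat 1) Ccvx, moccaContr_pos (by positivity) hCcvx,
    moccaExcess (max Cmat 1) Ccvx Cgrad, ?_⟩
  intro d m K F G Fv Gz gradF gradG nr R τ σv τv ΛF ΘF ΛG ΘG xstar z xzv wstar v wzv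
    hR hτ hFvconv _ hGzconv hFdiff hGdiff hgradF0 hgradG0 _ _ hMpos _ hΘF _ hΘG
    hFmono hFsmooth hFlip hGmono hGsmooth hcvx hCmat hxstar hwstar hGstar hz hxzv _ hwzv hGzv
  have hτR : 0 ≤ τ * R := mul_nonneg hτ hR.le
  have hexcess : 0 ≤ moccaExcess (max Cmat 1) Ccvx Cgrad * (τ * R) :=
    mul_nonneg ((by norm_num : (0 : ℝ) ≤ 5).trans (five_le_moccaExcess (by positivity) _ _)) hτR
  rcases isEmpty_or_nonempty (Fin d ⊕ Fin m) with hempty | hne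
  · have hCLip : 0 ≤ CLip := by simpa [e2] using hFlip v _ _ _ _ hwzv hwzv
    simp only [qnorm_of_isEmpty, e2_of_isEmpty, mul_zero, zero_add]
    exact ⟨hexcess, add_nonneg hCLip hexcess⟩
  obtain ⟨hΘFC, hΘGC, hMC, hMinvC⟩ : opNorm ΘF ≤ Cmat ∧ opNorm ΘG ≤ Cmat ∧
      opNorm (Mblock K τv σv) ≤ Cmat ∧ opNorm (Mblock K τv σv)⁻¹ ≤ Cmat := by
    simp [hCmat]
  have hC1 : 1 ≤ Cmat := one_le_of_opNorm_le hMpos.isUnit hMC hMinvC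
  have hC0 : 0 < Cmat := one_pos.trans_le hC1
  rw [max_eq_left hC1]
  have hK (x) : e2 (K *ᵥ x) ≤ Cmat * e2 x := (e2_mulVec_le_opNorm_Mblock K τv σv x).trans
    (mul_le_mul_of_nonneg_right hMC (e2_nonneg x))
  have hFstar := isSubgradOn_univ_iff.1 <|
    (isSubgradOn_univ_iff.2 hwstar).move_expansion_point (hFvconv v) hFdiff (hgradF0 _)
  have hGstar' := hGstar.move_expansion_point (hGzconv z) hGdiff (hgradG0 _)
  have hkey := displacement_le_expansion_error hFmono hFsmooth hGmono hGsmooth hcvx hxstar hz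
    hxzv hFstar hGstar' hwzv hGzv
  have hgrad : e2 (gradF v (K *ᵥ xstar)) ≤ Cmat * e2 (v - K *ᵥ xstar) := by
    rw [e2_sub_comm]
    exact e2_le_of_abs_dotProduct_le hC0 hΘFC fun u => by
      simpa using hFsmooth v (K *ᵥ xstar - v) u
  have hLip := hFlip v _ _ _ _ hwzv hFstar
  rw [← Matrix.mulVec_sub] at hLip ⊢
  exact ⟨qnorm_thetaMat_contraction Cgrad hCcvx.le hC1 hK hΘF hΘG hΘFC hΘGC hτR hkey,
    e2_primal_dual_le hCcvx hC0 hK hΘF hΘG hτR hkey hLip hgrad⟩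

end
end

section
/- MOCCA's dual expansion point equals the ADMM splitting variable (Section 3.3). Let K ∈ ℝ^{m×d}, let Σ ∈ ℝ^{m×m} be an invertible matrix, and let sequences x_s ∈ ℝ^d, u_s, Δ_s ∈ ℝ^m satisfy the ADMM dual update Δ_s = Δ_{s−1} + Σ(K x_s − u_{s−1}) for all s in the relevant range. Define w_s := Σ(K x_s − u_s) + Δ_s. Then for every t, Σ^{-1}(w_{t−1} − w_t) + K(2 x_t − x_{t−1}) = u_t. In other words, the MOCCA expansion point v_{t+1} = Σ^{-1}(w_{t−1} − w_t) + K x̄_t (with extrapolation parameter θ = 1, so x̄_t = 2x_t − x_{t−1}) coincides with the ADMM variable u_t. -/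
open Matrix

/-- **Section 3.3 of MOCCA (Barber–Sidky)**: the MOCCA dual expansion point
`v_{t+1} = Σ⁻¹(w_{t−1} − w_t) + K(2x_t − x_{t−1})` equals the ADMM splitting variable `u_t`,
where `w_s = Σ(Kx_s − u_s) + Δ_s` and `Δ` follows the ADMM dual update. -/
theorem mocca_expansion_point_eq_admm_variable (d m : ℕ)
    (K : Matrix (Fin m) (Fin d) ℝ) (Sm : Matrix (Fin m) (Fin m) ℝ) (hS : IsUnit Sm.det)
    (x : ℕ → Fin d → ℝ) (u Δ w : ℕ → Fin m → ℝ)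
    (hΔ : ∀ s, 1 ≤ s → Δ s = Δ (s - 1) + Sm.mulVec (K.mulVec (x s) - u (s - 1)))
    (hw : ∀ s, w s = Sm.mulVec (K.mulVec (x s) - u s) + Δ s) :
    ∀ t, 1 ≤ t →
      Sm⁻¹.mulVec (w (t - 1) - w t) + K.mulVec (2 • x t - x (t - 1)) = u t := by
  intro t ht
  have key : w (t - 1) - w t
      = Sm.mulVec (K.mulVec (x (t - 1)) - (2 : ℝ) • K.mulVec (x t) + u t) := by
    rw [hw, hw, hΔ t ht]
    simp only [Matrix.mulVec_sub, Matrix.mulVec_add, Matrix.mulVec_smul]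
    module
  rw [key, Matrix.mulVec_mulVec, Matrix.nonsing_inv_mul Sm hS, Matrix.one_mulVec,
    two_smul, two_smul]
  simp only [Matrix.mulVec_sub, Matrix.mulVec_add]
  abel
end

section
/- Positive semidefiniteness of the Pock–Chambolle diagonal preconditioner (Section 1.1.2, footnote 2). Let K ∈ ℝ^{m×d} be a matrix such that every row of K and every column of K contains at least one nonzero entry, and let λ > 0. Define diagonal matrices Σ ∈ ℝ^{m×m} and T ∈ ℝ^{d×d} by Σ_{ii} = λ / Σ_j |K_{ij}| and T_{jj} = λ^{-1} / Σ_i |K_{ij}|. Then the matrix M = [[T^{-1}, −Kᵀ], [−K, Σ^{-1}]] is positive semidefinite; equivalently, for all x ∈ ℝ^d and w ∈ ℝ^m, xᵀT^{-1}x − 2 wᵀKx + wᵀΣ^{-1}w ≥ 0, which is equivalent to ‖Σ^{1/2} K T^{1/2}‖ ≤ 1 in operator norm. -/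
/-!
Each cross term is split by weighted AM–GM, `2 wᵢ Kᵢⱼ xⱼ ≤ |Kᵢⱼ| (λ xⱼ² + λ⁻¹ wᵢ²)`.
Summing over `i, j` gives
`2 wᵀKx ≤ Σⱼ λ (Σᵢ |Kᵢⱼ|) xⱼ² + Σᵢ λ⁻¹ (Σⱼ |Kᵢⱼ|) wᵢ²`,
whose two weights are exactly the diagonal entries of `T⁻¹` and `Σ⁻¹`.
-/

open Matrix

lemma two_mul_abs_mul_abs_le {lam : ℝ} (hlam : 0 < lam) (a b : ℝ) :
    2 * (|a| * |b|) ≤ lam * a ^ 2 + lam⁻¹ * b ^ 2 := by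
  have hsq : 0 ≤ lam⁻¹ * (lam * |a| - |b|) ^ 2 := by positivity
  have hexpand : lam⁻¹ * (lam * |a| - |b|) ^ 2
      = lam * a ^ 2 + lam⁻¹ * b ^ 2 - 2 * (|a| * |b|) := by
    rw [← sq_abs a, ← sq_abs b]
    linear_combination (lam * |a| ^ 2 - 2 * |a| * |b|) * inv_mul_cancel₀ hlam.ne'
  linarith

lemma two_mul_mul_mul_le_abs_mul {lam : ℝ} (hlam : 0 < lam) (a b c : ℝ) :
    2 * (b * (c * a)) ≤ |c| * (lam * a ^ 2 + lam⁻¹ * b ^ 2) :=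
  calc 2 * (b * (c * a))
    _ ≤ 2 * |b * (c * a)| := by linarith [le_abs_self (b * (c * a))]
    _ = |c| * (2 * (|a| * |b|)) := by rw [abs_mul, abs_mul]; ring
    _ ≤ |c| * (lam * a ^ 2 + lam⁻¹ * b ^ 2) :=
      mul_le_mul_of_nonneg_left (two_mul_abs_mul_abs_le hlam a b) (abs_nonneg c)

lemma two_mul_dotProduct_mulVec_le {m n : Type*} [Fintype m] [Fintype n]
    (K : Matrix m n ℝ) {lam : ℝ} (hlam : 0 < lam) (x : n → ℝ) (w : m → ℝ) :
    2 * (w ⬝ᵥ K *ᵥ x) ≤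
      ∑ j, lam * (∑ i, |K i j|) * x j ^ 2 + ∑ i, lam⁻¹ * (∑ j, |K i j|) * w i ^ 2 := by
  have hsplit :
      ∑ j, lam * (∑ i, |K i j|) * x j ^ 2 + ∑ i, lam⁻¹ * (∑ j, |K i j|) * w i ^ 2
        = ∑ i, ∑ j, |K i j| * (lam * x j ^ 2 + lam⁻¹ * w i ^ 2) := by
    simp only [mul_add, Finset.sum_add_distrib]
    congr 1
    · rw [Finset.sum_comm]
      refine Finset.sum_congr rfl fun j _ => ?_
      rw [Finset.mul_sum, Finset.sum_mul]
      exact Finset.sum_congr rfl fun i _ => by ring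
    · refine Finset.sum_congr rfl fun i _ => ?_
      rw [Finset.mul_sum, Finset.sum_mul]
      exact Finset.sum_congr rfl fun j _ => by ring
  rw [hsplit, dotProduct, Finset.mul_sum]
  refine Finset.sum_le_sum fun i _ => ?_
  rw [mulVec, dotProduct, Finset.mul_sum, Finset.mul_sum]
  exact Finset.sum_le_sum fun j _ => two_mul_mul_mul_le_abs_mul hlam (x j) (w i) (K i j)

lemma inv_diagonal_of_ne_zero {n α : Type*} [Fintype n] [DecidableEq n] [Field α] {v : n → α}
    (hv : ∀ i, v i ≠ 0) : (diagonal v)⁻¹ = diagonal v⁻¹ := by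
  refine inv_eq_right_inv ?_
  rw [diagonal_mul_diagonal, ← diagonal_one]
  exact congrArg diagonal (funext fun i => mul_inv_cancel₀ (hv i))

lemma dotProduct_diagonal_mulVec {n α : Type*} [Fintype n] [DecidableEq n] [CommSemiring α]
    (v x : n → α) :
    x ⬝ᵥ diagonal v *ᵥ x = ∑ i, v i * x i ^ 2 := by
  simp only [dotProduct, mulVec_diagonal]
  exact Finset.sum_congr rfl fun i _ => by ring

lemma posSemidef_fromBlocks_neg_of_forall_le {m n : Type*} [Fintype m] [Fintype n]
    {A : Matrix n n ℝ} {D : Matrix m m ℝ} (hA : A.IsHermitian) (hD : D.IsHermitian)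
    (K : Matrix m n ℝ)
    (h : ∀ x w, 0 ≤ x ⬝ᵥ A *ᵥ x - 2 * (w ⬝ᵥ K *ᵥ x) + w ⬝ᵥ D *ᵥ w) :
    (fromBlocks A (-Kᵀ) (-K) D).PosSemidef := by
  refine posSemidef_iff_dotProduct_mulVec.mpr ⟨?_, fun z => ?_⟩
  · exact isHermitian_fromBlocks_iff.mpr ⟨hA, by simp, by simp, hD⟩
  obtain ⟨x, w, rfl⟩ : ∃ x w, z = Sum.elim x w :=
    ⟨_, _, (Sum.elim_comp_inl_inr z).symm⟩
  have hcross : x ⬝ᵥ -Kᵀ *ᵥ w = -(w ⬝ᵥ K *ᵥ x) := by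
    rw [neg_mulVec, dotProduct_neg, dotProduct_mulVec, vecMul_transpose, dotProduct_comm]
  have hz := h x w
  rw [star_trivial, fromBlocks_mulVec, Sum.elim_comp_inl, Sum.elim_comp_inr,
    sumElim_dotProduct_sumElim, dotProduct_add, dotProduct_add, hcross, neg_mulVec, dotProduct_neg]
  linarith

lemma sum_abs_pos_of_exists_ne_zero {ι : Type*} [Fintype ι] {f : ι → ℝ}
    (h : ∃ i, f i ≠ 0) : 0 < ∑ i, |f i| := by
  obtain ⟨i, hi⟩ := h
  exact Finset.sum_pos' (fun _ _ => abs_nonneg _) ⟨i, Finset.mem_univ i, abs_pos.mpr hi⟩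

/-- **Section 1.1.2, footnote 2, of MOCCA (Barber–Sidky)**: the Pock–Chambolle diagonal
step-size matrices `Σ_ii = λ/Σ_j|K_ij|`, `T_jj = λ⁻¹/Σ_i|K_ij|` make the block matrix
`M = [[T⁻¹, −Kᵀ],[−K, Σ⁻¹]]` positive semidefinite; equivalently
`xᵀT⁻¹x − 2wᵀKx + wᵀΣ⁻¹w ≥ 0` for all `x, w`. -/
theorem pock_chambolle_preconditioner_psd (d m : ℕ) (K : Matrix (Fin m) (Fin d) ℝ)
    (hrow : ∀ i, ∃ j, K i j ≠ 0) (hcol : ∀ j, ∃ i, K i j ≠ 0)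
    (lam : ℝ) (hlam : 0 < lam) :
    (Matrix.fromBlocks
        (Matrix.diagonal fun j => lam⁻¹ / ∑ i, |K i j|)⁻¹ (-Kᵀ) (-K)
        (Matrix.diagonal fun i => lam / ∑ j, |K i j|)⁻¹).PosSemidef ∧
    ∀ (x : Fin d → ℝ) (w : Fin m → ℝ),
      0 ≤ x ⬝ᵥ ((Matrix.diagonal fun j => lam⁻¹ / ∑ i, |K i j|)⁻¹).mulVec x
          - 2 * (w ⬝ᵥ K.mulVec x)
          + w ⬝ᵥ ((Matrix.diagonal fun i => lam / ∑ j, |K i j|)⁻¹).mulVec w := by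
  have hcs j := sum_abs_pos_of_exists_ne_zero (hcol j)
  have hrs i := sum_abs_pos_of_exists_ne_zero (hrow i)
  have hT : (diagonal fun j => lam⁻¹ / ∑ i, |K i j|)⁻¹
      = diagonal fun j => lam * ∑ i, |K i j| := by
    rw [inv_diagonal_of_ne_zero fun j => by have := (hcs j).ne'; positivity]
    exact congrArg diagonal (funext fun j => by simp [div_eq_mul_inv, mul_comm])
  have hS : (diagonal fun i => lam / ∑ j, |K i j|)⁻¹
      = diagonal fun i => lam⁻¹ * ∑ j, |K i j| := by
    rw [inv_diagonal_of_ne_zero fun i => by have := (hrs i).ne'; positivity]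
    exact congrArg diagonal (funext fun i => by simp [div_eq_mul_inv, mul_comm])
  have hquad : ∀ (x : Fin d → ℝ) (w : Fin m → ℝ),
      0 ≤ x ⬝ᵥ (diagonal fun j => lam * ∑ i, |K i j|) *ᵥ x - 2 * (w ⬝ᵥ K *ᵥ x)
          + w ⬝ᵥ (diagonal fun i => lam⁻¹ * ∑ j, |K i j|) *ᵥ w := fun x w => by
    rw [dotProduct_diagonal_mulVec, dotProduct_diagonal_mulVec]
    linarith [two_mul_dotProduct_mulVec_le K hlam x w]
  rw [hT, hS]
  exact ⟨posSemidef_fromBlocks_neg_of_forall_le (isHermitian_diagonal _)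
    (isHermitian_diagonal _) K hquad, hquad⟩
end
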